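/- Let {U_α}_{α∈I} be a finite open cover of a closed manifold and {ζ_α} a subordinate smooth partition of unity. Given a Sobolev cocycle {g_{αβ}} with values in a matrix Lie group G (satisfying g_{αγ} = g_{αβ}g_{βγ} on triple overlaps), define A_α := Σ_{β≠α} ζ_β g_{βα}^{-1} dg_{βα} on U_α. Then the gluing relation A_β = g_{αβ}^{-1} dg_{αβ} + g_{αβ}^{-1} A_α g_{αβ} holds a.e. on U_α ∩ U_β for all α, β with nonempty intersection, i.e. {A_α} defines a connection on the bundle. -/

import Mathlib

open Set

/-- Existence of a connection via a partition of unity: given a `G`-valued cocycle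
`{g_{αβ}}` on a finite open cover with a subordinate partition of unity `{ζ_α}`, the
local forms `A_α := Σ_{β ≠ α} ζ_β g_{βα}⁻¹ dg_{βα}` satisfy the gluing relation
`A_β = g_{αβ}⁻¹ dg_{αβ} + g_{αβ}⁻¹ A_α g_{αβ}` on `U_α ∩ U_β`, i.e. they define a
connection. Here `g_{βα}⁻¹ = g_{αβ}`. -/
theorem partition_of_unity_connection_gluing {n : ℕ} {ι : Type*}
    [Fintype ι] [DecidableEq ι] {A : Type*}
    [NormedRing A] [NormedAlgebra ℝ A] [CompleteSpace A]
    (U : ι → Set (EuclideanSpace ℝ (Fin n)))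
    (hUo : ∀ i, IsOpen (U i))
    (hcover : (⋃ i, U i) = Set.univ)
    (ζ : ι → EuclideanSpace ℝ (Fin n) → ℝ)
    (hζ_smooth : ∀ i, ContDiff ℝ (⊤ : ℕ∞) (ζ i))
    (hζ_nonneg : ∀ i x, 0 ≤ ζ i x)
    (hζ_supp : ∀ i, tsupport (ζ i) ⊆ U i)
    (hζ_sum : ∀ x, ∑ i, ζ i x = 1)
    (g : ι → ι → EuclideanSpace ℝ (Fin n) → A)
    (Dg : ι → ι → EuclideanSpace ℝ (Fin n) → (EuclideanSpace ℝ (Fin n) →L[ℝ] A))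
    (hg_id : ∀ i, ∀ x ∈ U i, g i i x = 1)
    (hg_inv : ∀ i j, ∀ x ∈ U i ∩ U j,
      g j i x * g i j x = 1 ∧ g i j x * g j i x = 1)
    (hg_deriv : ∀ i j, ∀ x ∈ U i ∩ U j, HasFDerivAt (g i j) (Dg i j x) x)
    (hg_coc : ∀ i j k, ∀ x ∈ U i ∩ U j ∩ U k, g i k x = g i j x * g j k x)
    (Aform : ι → EuclideanSpace ℝ (Fin n) → EuclideanSpace ℝ (Fin n) → A)
    (hA : ∀ i x v, Aform i x v =
      ∑ j ∈ Finset.univ.erase i, ζ j x • (g i j x * Dg j i x v)) :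
    ∀ i j, ∀ x ∈ U i ∩ U j, ∀ v : EuclideanSpace ℝ (Fin n),
      Aform j x v = g j i x * Dg i j x v + g j i x * Aform i x v * g i j x := by
  intro i j x hx v
  obtain ⟨hxi, hxj⟩ := hx
  -- the derivative of `g a a` vanishes on `U a` since `g a a = 1` there
  have hDid : ∀ a, x ∈ U a → Dg a a x = 0 := by
    intro a hxa
    have h1 : HasFDerivAt (g a a) (Dg a a x) x := hg_deriv a a x ⟨hxa, hxa⟩
    have h2 : HasFDerivAt (g a a) (0 : EuclideanSpace ℝ (Fin n) →L[ℝ] A) x := by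
      have heq : (fun _ : EuclideanSpace ℝ (Fin n) => (1 : A)) =ᶠ[nhds x] g a a := by
        filter_upwards [(hUo a).mem_nhds hxa] with y hy using (hg_id a y hy).symm
      exact (hasFDerivAt_const (1 : A) x).congr_of_eventuallyEq heq.symm
    exact h1.unique h2
  have hsupp : ∀ k, ζ k x ≠ 0 → x ∈ U k := fun k h =>
    hζ_supp k (subset_tsupport _ (Function.mem_support.mpr h))
  -- per-index identity
  have key : ∀ k, ζ k x • (g j k x * Dg k j x v)
      = ζ k x • (g j i x * (g i k x * Dg k i x v) * g i j x)
        + ζ k x • (g j i x * Dg i j x v) := by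
    intro k
    by_cases hk : ζ k x = 0
    · simp [hk]
    · have hxk := hsupp k hk
      have hderiv : Dg k j x v = Dg k i x v * g i j x + g k i x * Dg i j x v := by
        have h1 : HasFDerivAt (g k j) (Dg k j x) x := hg_deriv k j x ⟨hxk, hxj⟩
        have h2 := (hg_deriv k i x ⟨hxk, hxi⟩).mul' (hg_deriv i j x ⟨hxi, hxj⟩)
        have heq : (fun y => g k i y * g i j y) =ᶠ[nhds x] g k j := by
          filter_upwards [(((hUo k).inter (hUo i)).inter (hUo j)).mem_nhds
            ⟨⟨hxk, hxi⟩, hxj⟩] with y hy using (hg_coc k i j y hy).symm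
        have h3 := h2.congr_of_eventuallyEq heq.symm
        have h4 := h3.unique h1
        have := congrArg (fun L : EuclideanSpace ℝ (Fin n) →L[ℝ] A => L v) h4
        simp only [ContinuousLinearMap.add_apply, ContinuousLinearMap.smul_apply,
          ContinuousLinearMap.smulRight_apply, smul_eq_mul, op_smul_eq_mul] at this
        rw [← this, add_comm]
      have hcoc : g j k x = g j i x * g i k x := hg_coc j i k x ⟨⟨hxj, hxi⟩, hxk⟩
      have hinv : g i k x * g k i x = 1 := (hg_inv i k x ⟨hxi, hxk⟩).2
      rw [← smul_add]
      congr 1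
      rw [hcoc, hderiv, mul_add]
      congr 1
      · simp [mul_assoc]
      · rw [mul_assoc (g j i x), ← mul_assoc (g i k x), hinv, one_mul]
  rw [hA j x v, hA i x v]
  have hLj : ζ j x • (g j j x * Dg j j x v) = 0 := by
    simp [hDid j hxj]
  have hRi : ζ i x • (g i i x * Dg i i x v) = 0 := by
    simp [hDid i hxi]
  rw [Finset.sum_erase_eq_sub (Finset.mem_univ j), Finset.sum_erase_eq_sub (Finset.mem_univ i),
    hLj, hRi, sub_zero, sub_zero]
  rw [Finset.sum_congr rfl (fun k _ => key k), Finset.sum_add_distrib,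
    ← Finset.sum_smul, hζ_sum x, one_smul, Finset.mul_sum, Finset.sum_mul]
  simp only [mul_smul_comm, smul_mul_assoc]
  rw [add_comm]
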